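/- arXiv:1904.02376 — 2 statements merged into one kernel-verified Lean document; each statement's English description precedes it below -/
import Mathlib

section
/- For G finite, a G-graded ring R is graded nil clean if and only if J^g(R) is graded-nil and R/J^g(R) is graded nil clean. -/
/-- A `G`-grading of a ring `R`: a family of additive subgroups `C g` with
`C g * C h ⊆ C (g*h)`, `1 ∈ C e`, and `R = ⊕_g C g` (internal direct sum). -/
structure Grading (G : Type*) [Group G] [DecidableEq G] (R : Type*) [Ring R] where
  C : G → AddSubgroup R
  one_mem : (1 : R) ∈ C 1
  mul_mem : ∀ {g h : G} {a b : R}, a ∈ C g → b ∈ C h → a * b ∈ C (g * h)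
  isInternal : DirectSum.IsInternal C

namespace Grading

variable {G : Type*} [Group G] [DecidableEq G] {R : Type*} [Ring R]

/-- An element is homogeneous if it lies in some component. -/
def Homogeneous (A : Grading G R) (a : R) : Prop := ∃ g, a ∈ A.C g

/-- A homogeneous element is graded nil clean if it is the sum of a homogeneous
idempotent and a homogeneous nilpotent. -/
def IsGradedNilClean (A : Grading G R) (a : R) : Prop :=
  ∃ f b : R, A.Homogeneous f ∧ IsIdempotentElem f ∧ A.Homogeneous b ∧
    IsNilpotent b ∧ a = f + b

/-- A graded ring is graded nil clean if every homogeneous element is. -/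
def GradedNilClean (A : Grading G R) : Prop :=
  ∀ a : R, A.Homogeneous a → A.IsGradedNilClean a

/-- Graded strongly nil clean element: the idempotent and nilpotent commute. -/
def IsGradedStronglyNilClean (A : Grading G R) (a : R) : Prop :=
  ∃ f b : R, A.Homogeneous f ∧ IsIdempotentElem f ∧ A.Homogeneous b ∧
    IsNilpotent b ∧ f * b = b * f ∧ a = f + b

def GradedStronglyNilClean (A : Grading G R) : Prop :=
  ∀ a : R, A.Homogeneous a → A.IsGradedStronglyNilClean a

end Grading

namespace Grading

variable {G : Type*} [Group G] [DecidableEq G] {R : Type*} [Ring R]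

/-- A two-sided ideal, viewed as an additive subgroup. -/
def tiAddSubgroup (I : TwoSidedIdeal R) : AddSubgroup R where
  carrier := I
  add_mem' := fun h1 h2 => I.add_mem h1 h2
  zero_mem' := I.zero_mem
  neg_mem' := fun h => I.neg_mem h

/-- A two-sided ideal is homogeneous if each of its elements lies in the sum of
the intersections `I ∩ R_g`, i.e. `I = ⊕_g (I ∩ R_g)`. -/
def HomogeneousTI (A : Grading G R) (I : TwoSidedIdeal R) : Prop :=
  ∀ a ∈ I, a ∈ ⨆ g : G, (A.C g ⊓ tiAddSubgroup I)

/-- The `g`-component of the quotient grading on `R/I`: the image of `R_g`. -/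
def quotC (A : Grading G R) (I : TwoSidedIdeal R) (g : G) :
    AddSubgroup I.ringCon.Quotient :=
  (A.C g).map (I.ringCon.mk' : R →+* I.ringCon.Quotient).toAddMonoidHom

/-- Homogeneous elements of the quotient graded ring `R/I`. -/
def QuotHomogeneous (A : Grading G R) (I : TwoSidedIdeal R)
    (a : I.ringCon.Quotient) : Prop :=
  ∃ g, a ∈ A.quotC I g

/-- The quotient graded ring `R/I` is graded nil clean. -/
def QuotGradedNilClean (A : Grading G R) (I : TwoSidedIdeal R) : Prop :=
  ∀ a : I.ringCon.Quotient, A.QuotHomogeneous I a →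
    ∃ f b : I.ringCon.Quotient, A.QuotHomogeneous I f ∧ IsIdempotentElem f ∧
      A.QuotHomogeneous I b ∧ IsNilpotent b ∧ a = f + b

/-- A quotient element is graded strongly nil clean. -/
def QuotIsGradedStronglyNilClean (A : Grading G R) (I : TwoSidedIdeal R)
    (a : I.ringCon.Quotient) : Prop :=
  ∃ f b : I.ringCon.Quotient, A.QuotHomogeneous I f ∧ IsIdempotentElem f ∧
    A.QuotHomogeneous I b ∧ IsNilpotent b ∧ f * b = b * f ∧ a = f + b

/-- The quotient graded ring `R/I` is graded strongly nil clean. -/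
def QuotGradedStronglyNilClean (A : Grading G R) (I : TwoSidedIdeal R) : Prop :=
  ∀ a : I.ringCon.Quotient, A.QuotHomogeneous I a →
    A.QuotIsGradedStronglyNilClean I a

/-- The ideal `I` is nilpotent: some power `I^n` vanishes, i.e. every product of
`n` elements of `I` is zero. -/
def NilpotentTI (I : TwoSidedIdeal R) : Prop :=
  ∃ n : ℕ, 0 < n ∧ ∀ x : Fin n → R, (∀ i, x i ∈ I) → (List.ofFn x).prod = 0

end Grading

/-- A homogeneous right ideal of a graded ring. -/
structure HomRightIdeal {G : Type*} [Group G] [DecidableEq G] {R : Type*} [Ring R]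
    (A : Grading G R) where
  carrier : AddSubgroup R
  mul_mem_right : ∀ a ∈ carrier, ∀ r : R, a * r ∈ carrier
  homogeneous : ∀ a ∈ carrier, a ∈ ⨆ g : G, (A.C g ⊓ carrier)

namespace HomRightIdeal

variable {G : Type*} [Group G] [DecidableEq G] {R : Type*} [Ring R] {A : Grading G R}

/-- A maximal (proper) homogeneous right ideal. -/
def IsMaximal (I : HomRightIdeal A) : Prop :=
  I.carrier ≠ ⊤ ∧ ∀ J : HomRightIdeal A, J.carrier ≠ ⊤ → I.carrier ≤ J.carrier →
    J.carrier = I.carrier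

end HomRightIdeal

/-- The graded Jacobson radical: the intersection of all maximal homogeneous
right ideals. -/
def Grading.gradedJacobson {G : Type*} [Group G] [DecidableEq G] {R : Type*} [Ring R]
    (A : Grading G R) : Set R :=
  { a | ∀ I : HomRightIdeal A, I.IsMaximal → a ∈ I.carrier }

/-!
A homogeneous idempotent lies in degree `1`, since `f = f * f` has degree both `g` and `g * g`.
If such an `f ≠ 0` lies in `J^g(R)`, then `(1 - f)R` is a proper homogeneous right ideal, and a
maximal homogeneous right ideal containing it contains both `f` and `1 - f`; so `f = 0`. Hence,
in a graded nil clean ring, writing a homogeneous `a ∈ J^g(R)` as `a = f + b`, the idempotent `f`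
is nilpotent modulo `J^g(R)`, thus lies in `J^g(R)` and vanishes, and `a = b` is nilpotent.

Conversely, `J^g(R)` is a homogeneous ideal, so `R/J^g(R)` is again graded. In a graded nil clean
ring every homogeneous element of degree `≠ 1` is nilpotent, because its idempotent part sits in
degree `1` and must vanish; nilpotence lifts modulo a graded-nil ideal. In degree `1` the
idempotent part lifts along the nil ideal as `1 - (1 - x ^ n) ^ n`.
-/

namespace Grading

variable {G : Type*} [Group G] [DecidableEq G] {R : Type*} [Ring R] (A : Grading G R)

noncomputable instance : DirectSum.Decomposition A.C := A.isInternal.chooseDecomposition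

variable {A}

lemma eq_zero_of_mem_of_mem {a : R} {g h : G} (hg : a ∈ A.C g) (hh : a ∈ A.C h) (hgh : g ≠ h) :
    a = 0 := by
  by_contra ha
  exact hgh (DirectSum.degree_eq_of_mem_mem A.C hg hh ha)

lemma pow_mem {a : R} {g : G} (ha : a ∈ A.C g) : ∀ n : ℕ, a ^ n ∈ A.C (g ^ n)
  | 0 => by simpa using A.one_mem
  | n + 1 => by simpa only [pow_succ] using A.mul_mem (pow_mem ha n) ha

lemma mem_one_of_isIdempotentElem {f : R} (hf : A.Homogeneous f) (hfe : IsIdempotentElem f) :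
    f ∈ A.C 1 := by
  obtain ⟨g, hg⟩ := hf
  by_cases hg1 : g = 1
  · exact hg1 ▸ hg
  have hgg : g * g ≠ g := fun h => hg1 (by simpa using h)
  rw [eq_zero_of_mem_of_mem (hfe ▸ A.mul_mem hg hg) hg hgg]
  exact zero_mem _

lemma GradedNilClean.isNilpotent_of_mem_of_ne_one (hA : A.GradedNilClean) {a : R} {g : G}
    (ha : a ∈ A.C g) (hg : g ≠ 1) : IsNilpotent a := by
  obtain ⟨f, b, hf, hfe, ⟨k, hb⟩, hbn, rfl⟩ := hA a ⟨g, ha⟩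
  have hf1 := mem_one_of_isIdempotentElem hf hfe
  by_cases hk : k = 1
  · subst hk
    rw [eq_zero_of_mem_of_mem ha (add_mem hf1 hb) hg]
    exact IsNilpotent.zero
  · have hf0 : f = 0 := by
      have h := DirectSum.decompose_of_mem_ne A.C ha hg
      rwa [DirectSum.decompose_add, DirectSum.add_apply, AddSubgroup.coe_add,
        DirectSum.decompose_of_mem_same A.C hf1, DirectSum.decompose_of_mem_ne A.C hb hk,
        add_zero] at h
    rwa [hf0, zero_add]

section Quotient

variable (J : TwoSidedIdeal R)

lemma mk'_eq_zero_iff {x : R} : J.ringCon.mk' x = 0 ↔ x ∈ J :=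
  (RingCon.eq _).trans (J.mem_iff x).symm

variable (A) in
def quotient (hJ : DirectSum.SetLike.IsHomogeneous A.C J) : Grading G J.ringCon.Quotient where
  C := A.quotC J
  one_mem := ⟨1, A.one_mem, map_one J.ringCon.mk'⟩
  mul_mem := by
    rintro g h - - ⟨a, ha, rfl⟩ ⟨b, hb, rfl⟩
    exact ⟨a * b, A.mul_mem ha hb, map_mul J.ringCon.mk' a b⟩
  isInternal := by
    let π g : A.C g →+ A.quotC J g :=
      (J.ringCon.mk' : R →+* J.ringCon.Quotient).toAddMonoidHom.addSubgroupMap (A.C g)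
    have hπ x : DirectSum.coeAddMonoidHom (A.quotC J) (DirectSum.map π x) =
        J.ringCon.mk' (DirectSum.coeAddMonoidHom A.C x) := by
      induction x using DirectSum.induction_on with
      | zero => simp
      | of g a =>
        rw [DirectSum.map_of, DirectSum.coeAddMonoidHom_of, DirectSum.coeAddMonoidHom_of]
        rfl
      | add x y hx hy => simp [hx, hy]
    have hπ_surj : Function.Surjective (DirectSum.map π) :=
      (DirectSum.map_surjective π).2 fun g => AddMonoidHom.addSubgroupMap_surjective _ _
    refine ⟨(injective_iff_map_eq_zero _).2 fun y hy => ?_, fun y => ?_⟩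
    · obtain ⟨x, rfl⟩ := hπ_surj y
      rw [hπ, mk'_eq_zero_iff] at hy
      ext g
      have hxg : (x g : R) ∈ J := by
        have hx : DirectSum.decompose A.C (DirectSum.coeAddMonoidHom A.C x) = x :=
          (DirectSum.decompose A.C).apply_symm_apply x
        simpa only [hx] using hJ g hy
      rw [DirectSum.map_apply, DirectSum.zero_apply]
      exact (mk'_eq_zero_iff J).2 hxg
    · obtain ⟨r, rfl⟩ := J.ringCon.mk'_surjective y
      obtain ⟨x, rfl⟩ := A.isInternal.2 r
      exact ⟨_, hπ x⟩

variable {J}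

lemma isNilpotent_of_isNilpotent_mk' (hnil : ∀ a ∈ J, A.Homogeneous a → IsNilpotent a)
    {a : R} (ha : A.Homogeneous a) (h : IsNilpotent (J.ringCon.mk' a)) : IsNilpotent a := by
  obtain ⟨g, hg⟩ := ha
  obtain ⟨n, hn⟩ := h
  obtain ⟨m, hm⟩ := hnil (a ^ n) ((mk'_eq_zero_iff J).1 (by rw [map_pow, hn]))
    ⟨g ^ n, A.pow_mem hg n⟩
  exact ⟨n * m, by rw [pow_mul, hm]⟩

lemma exists_isIdempotentElem_mk'_eq (hnil : ∀ a ∈ J, A.Homogeneous a → IsNilpotent a)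
    {x : R} (hx : x ∈ A.C 1) (hxe : IsIdempotentElem (J.ringCon.mk' x)) :
    ∃ e ∈ A.C 1, IsIdempotentElem e ∧ J.ringCon.mk' e = J.ringCon.mk' x := by
  have hx2 : x - x ^ 2 ∈ A.C 1 := sub_mem hx (by simpa using A.pow_mem hx 2)
  obtain ⟨n, hn⟩ := hnil (x - x ^ 2)
    ((mk'_eq_zero_iff J).1 (by rw [map_sub, map_pow, sq, hxe.eq, sub_self])) ⟨1, hx2⟩
  have hn' : (x - x ^ 2) ^ (n + 1) = 0 := by rw [pow_succ, hn, zero_mul]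
  have hxn : 1 - x ^ (n + 1) ∈ A.C 1 := sub_mem A.one_mem (by simpa using A.pow_mem hx (n + 1))
  refine ⟨1 - (1 - x ^ (n + 1)) ^ (n + 1),
    sub_mem A.one_mem (by simpa using A.pow_mem hxn (n + 1)),
    isIdempotentElem_one_sub_one_sub_pow_pow x (n + 1) hn', ?_⟩
  simp only [map_sub, map_one, map_pow, hxe.pow_succ_eq, hxe.one_sub.pow_succ_eq, sub_sub_cancel]

lemma gradedNilClean_of_quotient (hJ : DirectSum.SetLike.IsHomogeneous A.C J)
    (hnil : ∀ a ∈ J, A.Homogeneous a → IsNilpotent a) (hq : (A.quotient J hJ).GradedNilClean) :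
    A.GradedNilClean := by
  rintro a ⟨g, ha⟩
  have ha' : J.ringCon.mk' a ∈ A.quotC J g := ⟨a, ha, rfl⟩
  by_cases hg : g = 1
  · subst hg
    obtain ⟨F, B, hF, hFe, -, hBn, haFB⟩ := hq _ ⟨1, ha'⟩
    obtain ⟨x, hx, hxF : J.ringCon.mk' x = F⟩ := mem_one_of_isIdempotentElem hF hFe
    obtain ⟨e, he, hee, hex⟩ := exists_isIdempotentElem_mk'_eq hnil hx (hxF ▸ hFe)
    have hae : a - e ∈ A.C 1 := sub_mem ha he
    refine ⟨e, a - e, ⟨1, he⟩, hee, ⟨1, hae⟩, ?_, (add_sub_cancel e a).symm⟩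
    apply isNilpotent_of_isNilpotent_mk' hnil ⟨1, hae⟩
    rwa [map_sub, hex, haFB, ← hxF, add_sub_cancel_left]
  · exact ⟨0, a, ⟨1, zero_mem _⟩, .zero, ⟨g, ha⟩, isNilpotent_of_isNilpotent_mk' hnil ⟨g, ha⟩
      (hq.isNilpotent_of_mem_of_ne_one ha' hg), (zero_add a).symm⟩

lemma quotGradedNilClean_iff (hJ : DirectSum.SetLike.IsHomogeneous A.C J) :
    A.QuotGradedNilClean J ↔ (A.quotient J hJ).GradedNilClean :=
  Iff.rfl

lemma GradedNilClean.quotGradedNilClean (hA : A.GradedNilClean) : A.QuotGradedNilClean J := by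
  rintro _ ⟨g, a, ha, rfl⟩
  obtain ⟨f, b, ⟨h, hf⟩, hfe, ⟨k, hb⟩, hbn, rfl⟩ := hA a ⟨g, ha⟩
  exact ⟨_, _, ⟨h, f, hf, rfl⟩, hfe.map J.ringCon.mk', ⟨k, b, hb, rfl⟩, hbn.map J.ringCon.mk',
    map_add J.ringCon.mk' f b⟩

end Quotient

end Grading

namespace HomRightIdeal

variable {G : Type*} [Group G] [DecidableEq G] {R : Type*} [Ring R] {A : Grading G R}

lemma carrier_eq_top_of_one_mem (I : HomRightIdeal A) (h : (1 : R) ∈ I.carrier) :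
    I.carrier = ⊤ :=
  eq_top_iff.2 fun r _ => by simpa using I.mul_mem_right 1 h r

lemma isHomogeneous (I : HomRightIdeal A) : DirectSum.SetLike.IsHomogeneous A.C I.carrier := by
  intro i m hm
  refine AddSubgroup.iSup_induction _ (I.homogeneous m hm)
    (C := fun x => (DirectSum.decompose A.C x i : R) ∈ I.carrier) ?_ ?_ ?_
  · rintro g x ⟨hxg, hxI⟩
    by_cases hgi : g = i
    · subst hgi
      rwa [DirectSum.decompose_of_mem_same A.C hxg]
    · rw [DirectSum.decompose_of_mem_ne A.C hxg hgi]
      exact zero_mem _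
  · simp only [DirectSum.decompose_zero, DirectSum.zero_apply, ZeroMemClass.coe_zero]
    exact zero_mem _
  · intro x y hx hy
    rw [DirectSum.decompose_add, DirectSum.add_apply, AddSubgroup.coe_add]
    exact add_mem hx hy

def mulLeft (u : R) (hu : u ∈ A.C 1) : HomRightIdeal A where
  carrier := (AddMonoidHom.mulLeft u).range
  mul_mem_right := by
    rintro _ ⟨x, rfl⟩ r
    exact ⟨x * r, (mul_assoc u x r).symm⟩
  homogeneous := by
    rintro _ ⟨x, rfl⟩
    induction x using DirectSum.Decomposition.inductionOn A.C with
    | zero => simp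
    | @homogeneous i m =>
      refine AddSubgroup.mem_iSup_of_mem i ⟨?_, ⟨m, rfl⟩⟩
      simpa using A.mul_mem hu m.2
    | add x y hx hy => simpa [mul_add] using add_mem hx hy

lemma exists_isMaximal_le (I : HomRightIdeal A) (h1 : (1 : R) ∉ I.carrier) :
    ∃ M : HomRightIdeal A, M.IsMaximal ∧ I.carrier ≤ M.carrier := by
  let S : Set (AddSubgroup R) := {N | (1 : R) ∉ N ∧ ∃ M : HomRightIdeal A, M.carrier = N}
  have hchain : ∀ c ⊆ S, IsChain (· ≤ ·) c → ∀ N ∈ c, ∃ ub ∈ S, ∀ N' ∈ c, N' ≤ ub := by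
    intro c hcS hc N hN
    have hmem {x : R} : x ∈ sSup c ↔ ∃ N ∈ c, x ∈ N :=
      AddSubgroup.mem_sSup_of_directedOn ⟨N, hN⟩ hc.directedOn
    refine ⟨sSup c, ⟨fun h => ?_, ⟨sSup c, fun a ha r => ?_, fun a ha => ?_⟩, rfl⟩,
      fun N' hN' => le_sSup hN'⟩
    · obtain ⟨N', hN', h1N'⟩ := hmem.1 h
      exact (hcS hN').1 h1N'
    · obtain ⟨N', hN', haN'⟩ := hmem.1 ha
      obtain ⟨-, M, rfl⟩ := hcS hN'
      exact hmem.2 ⟨_, hN', M.mul_mem_right a haN' r⟩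
    · obtain ⟨N', hN', haN'⟩ := hmem.1 ha
      obtain ⟨-, M, rfl⟩ := hcS hN'
      exact iSup_mono (fun g => inf_le_inf_left _ (le_sSup hN')) (M.homogeneous a haN')
  obtain ⟨N, hIN, hN⟩ := zorn_le_nonempty₀ S hchain I.carrier ⟨h1, I, rfl⟩
  obtain ⟨h1N, M, rfl⟩ := hN.prop
  refine ⟨M, ⟨fun h => h1N (h ▸ trivial), fun M' hM' hle => ?_⟩, hIN⟩
  exact (hN.eq_of_le ⟨fun h => hM' (M'.carrier_eq_top_of_one_mem h), M', rfl⟩ hle).symm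

end HomRightIdeal

namespace Grading

variable {G : Type*} [Group G] [DecidableEq G] {R : Type*} [Ring R] {A : Grading G R}

lemma eq_zero_of_isIdempotentElem_of_mem_gradedJacobson {f : R} (hfJ : f ∈ A.gradedJacobson)
    (hf : A.Homogeneous f) (hfe : IsIdempotentElem f) : f = 0 := by
  have hf1 := mem_one_of_isIdempotentElem hf hfe
  by_contra hf0
  let K := HomRightIdeal.mulLeft (1 - f) (sub_mem A.one_mem hf1)
  have h1K : (1 : R) ∉ K.carrier := by
    rintro ⟨x, hx : (1 - f) * x = 1⟩
    apply hf0
    calc f = f * ((1 - f) * x) := by rw [hx, mul_one]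
      _ = 0 := by rw [← mul_assoc, mul_sub, mul_one, hfe.eq, sub_self, zero_mul]
  obtain ⟨M, hM, hKM⟩ := K.exists_isMaximal_le h1K
  refine hM.1 (M.carrier_eq_top_of_one_mem ?_)
  simpa using add_mem (hfJ M hM) (hKM ⟨1, mul_one (1 - f)⟩)

variable {J : TwoSidedIdeal R}

lemma isHomogeneous_of_forall_mem_iff (hJ : ∀ x : R, x ∈ J ↔ x ∈ A.gradedJacobson) :
    DirectSum.SetLike.IsHomogeneous A.C J :=
  fun i m hm => (hJ _).2 fun M hM => M.isHomogeneous i ((hJ m).1 hm M hM)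

lemma GradedNilClean.isNilpotent_of_mem_gradedJacobson (hA : A.GradedNilClean)
    (hJ : ∀ x : R, x ∈ J ↔ x ∈ A.gradedJacobson) {a : R} (haJ : a ∈ A.gradedJacobson)
    (ha : A.Homogeneous a) : IsNilpotent a := by
  obtain ⟨f, b, hf, hfe, -, hbn, rfl⟩ := hA a ha
  have hfb : J.ringCon.mk' f = -J.ringCon.mk' b :=
    eq_neg_of_add_eq_zero_left (by rw [← map_add, mk'_eq_zero_iff, hJ]; exact haJ)
  have hfJ : f ∈ J := (mk'_eq_zero_iff J).1 <|
    (hfe.map J.ringCon.mk').eq_zero_of_isNilpotent (hfb ▸ (hbn.map J.ringCon.mk').neg)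
  rwa [eq_zero_of_isIdempotentElem_of_mem_gradedJacobson ((hJ f).1 hfJ) hf hfe, zero_add]

end Grading

theorem stmt6_general {G : Type*} [Group G] [DecidableEq G] {R : Type*} [Ring R]
    (A : Grading G R) (J : TwoSidedIdeal R)
    (hJ : ∀ x : R, x ∈ J ↔ x ∈ A.gradedJacobson) :
    A.GradedNilClean ↔
      ((∀ a ∈ A.gradedJacobson, A.Homogeneous a → IsNilpotent a) ∧
        A.QuotGradedNilClean J) :=
by
  have hJhom := Grading.isHomogeneous_of_forall_mem_iff hJ
  refine ⟨fun hA => ⟨fun _ ha hh => hA.isNilpotent_of_mem_gradedJacobson hJ ha hh,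
    hA.quotGradedNilClean⟩, fun ⟨hnil, hq⟩ => ?_⟩
  exact Grading.gradedNilClean_of_quotient hJhom (fun a ha => hnil a ((hJ a).1 ha))
    ((Grading.quotGradedNilClean_iff hJhom).1 hq)

/-- For `G` finite, a `G`-graded ring `R` is graded nil clean iff `J^g(R)` is
graded-nil and `R/J^g(R)` is graded nil clean.  Here `J` is the graded Jacobson
radical realized as a two-sided ideal. -/
theorem stmt6 {G : Type*} [Group G] [DecidableEq G] [Finite G] {R : Type*} [Ring R]
    (A : Grading G R) (J : TwoSidedIdeal R)
    (hJ : ∀ x : R, x ∈ J ↔ x ∈ A.gradedJacobson) :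
    A.GradedNilClean ↔
      ((∀ a ∈ A.gradedJacobson, A.Homogeneous a → IsNilpotent a) ∧
        A.QuotGradedNilClean J) :=
  stmt6_general A J hJ
end

section
/- Let R be a G-graded ring and I a homogeneous nilpotent ideal. If a is a homogeneous element of R whose image in R/I is graded strongly nil clean, then a is graded strongly nil clean in R. -/
/-!
Let `a ∈ R_k`. If `k = e`, the relation `a ≡ f + b` with `f² = f`, `b` nilpotent and `fb = bf`
makes `a² - a ≡ b(2f + b - 1)` nilpotent modulo `I`, hence nilpotent. Newton's method for
`X² - X` (whose derivative `2X - 1` squares to `1 + 4(X² - X)`, a unit) then yields an idempotent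
`p` in the commutative ring `ℤ[a] ⊆ R_e` with `a - p` nilpotent.

If `k ≠ e`, homogeneity of `I` lets one compare homogeneous components modulo `I`: a homogeneous
idempotent of degree `≠ e` lies in `I`, and the `k`-component of `a ≡ f + b` shows that `a` is
congruent to `0` or to `b`. Either way `a` is nilpotent, and `a = 0 + a`.
-/

open Polynomial IsMulCommutative in
theorem exists_isIdempotentElem_mem_adjoin_of_isNilpotent_sq_sub {R : Type*} [Ring R] {a : R}
    (h : IsNilpotent (a ^ 2 - a)) :
    ∃ e ∈ Algebra.adjoin ℤ {a}, IsIdempotentElem e ∧ IsNilpotent (a - e) := by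
  set S := Algebra.adjoin ℤ {a}
  set x : S := ⟨a, Algebra.self_mem_adjoin_singleton ℤ a⟩
  have hx : IsNilpotent (x ^ 2 - x) :=
    (IsNilpotent.map_iff (f := S.val) Subtype.val_injective).mp h
  have hP : IsNilpotent (aeval x (X ^ 2 - X : ℤ[X])) := by simpa using hx
  have hP' : IsUnit (aeval x (derivative (X ^ 2 - X : ℤ[X]))) := by
    have : IsUnit ((2 * x - 1) ^ 2) := by
      rw [show (2 * x - 1) ^ 2 = 1 + (x ^ 2 - x) * 4 by ring]
      exact ((Commute.all _ _).isNilpotent_mul_right hx).isUnit_one_add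
    simpa [derivative_X_pow, map_ofNat] using (isUnit_pow_iff two_ne_zero).mp this
  obtain ⟨r, ⟨hnil, hr⟩, -⟩ := existsUnique_nilpotent_sub_and_aeval_eq_zero hP hP'
  have hr : IsIdempotentElem r := by
    rw [IsIdempotentElem, ← sq, ← sub_eq_zero]
    simpa using hr
  exact ⟨r, r.2, hr.map S.val, (IsNilpotent.map_iff (f := S.val) Subtype.val_injective).mpr hnil⟩

theorem isNilpotent_sq_sub_self_add {R : Type*} [Ring R] {f b : R} (hf : IsIdempotentElem f)
    (hb : IsNilpotent b) (hfb : Commute f b) : IsNilpotent ((f + b) ^ 2 - (f + b)) := by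
  have hcomm : Commute b (f + f + b - 1) :=
    ((hfb.symm.add_right hfb.symm).add_right (Commute.refl b)).sub_right (Commute.one_right b)
  have : (f + b) ^ 2 - (f + b) = b * (f + f + b - 1) := by
    rw [sq, add_mul, mul_add, mul_add, hf.eq, hfb.eq]
    noncomm_ring
  rw [this]
  exact hcomm.isNilpotent_mul_right hb

theorem TwoSidedIdeal.ringCon_mk'_eq_zero_iff {R : Type*} [Ring R] {I : TwoSidedIdeal R} {x : R} :
    I.ringCon.mk' x = 0 ↔ x ∈ I := by
  rw [← TwoSidedIdeal.mem_ker, TwoSidedIdeal.ker_ringCon_mk']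

namespace Grading

variable {G : Type*} [Group G] [DecidableEq G] {R : Type*} [Ring R] (A : Grading G R)
  {I : TwoSidedIdeal R}

noncomputable instance inst_s9 : DirectSum.Decomposition A.C := A.isInternal.chooseDecomposition

def oneSubring : Subring R where
  carrier := A.C 1
  one_mem' := A.one_mem
  mul_mem' ha hb := by simpa using A.mul_mem ha hb
  zero_mem' := (A.C 1).zero_mem
  add_mem' := add_mem
  neg_mem' := neg_mem

theorem isGradedStronglyNilClean_of_isNilpotent {a : R} (ha : A.Homogeneous a)
    (hnil : IsNilpotent a) : A.IsGradedStronglyNilClean a :=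
  ⟨0, a, ⟨1, zero_mem _⟩, .zero, ha, hnil, by simp, by simp⟩

theorem isGradedStronglyNilClean_of_mem_one {a : R} (ha : a ∈ A.C 1)
    (h : IsNilpotent (a ^ 2 - a)) : A.IsGradedStronglyNilClean a := by
  obtain ⟨e, he, hidem, hnil⟩ := exists_isIdempotentElem_mem_adjoin_of_isNilpotent_sq_sub h
  have hadjoin : Algebra.adjoin ℤ {a} ≤ subalgebraOfSubring A.oneSubring :=
    Algebra.adjoin_le (Set.singleton_subset_iff.mpr ha)
  have he1 : e ∈ A.C 1 := hadjoin he
  have hae : Commute a e := Algebra.commute_of_mem_adjoin_self he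
  exact ⟨e, a - e, ⟨1, he1⟩, hidem, ⟨1, sub_mem ha he1⟩, hnil,
    (hae.symm.sub_right (Commute.refl e)).eq, by abel⟩

variable {A}

theorem NilpotentTI.isNilpotent_of_mem (hI : NilpotentTI I) {x : R} (hx : x ∈ I) :
    IsNilpotent x := by
  obtain ⟨n, -, hprod⟩ := hI
  refine ⟨n, ?_⟩
  simpa using hprod (fun _ => x) (fun _ => hx)

theorem NilpotentTI.isNilpotent_of_isNilpotent_mk' (hI : NilpotentTI I) {x : R}
    (hx : IsNilpotent (I.ringCon.mk' x)) : IsNilpotent x := by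
  obtain ⟨m, hm⟩ := hx
  obtain ⟨n, hn⟩ := hI.isNilpotent_of_mem (TwoSidedIdeal.ringCon_mk'_eq_zero_iff.mp
    (by rwa [map_pow]) : x ^ m ∈ I)
  exact ⟨m * n, by rw [pow_mul, hn]⟩

theorem HomogeneousTI.decompose_mem (hI : A.HomogeneousTI I) {x : R}
    (hx : x ∈ I) (g : G) : (DirectSum.decompose A.C x g : R) ∈ I := by
  refine AddSubgroup.iSup_induction _ (C := fun y => (DirectSum.decompose A.C y g : R) ∈ I)
    (hI x hx) (fun h y hy => ?_) (by simp) fun y z hy hz => ?_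
  · by_cases hhg : h = g
    · subst hhg
      rw [DirectSum.decompose_of_mem_same A.C hy.1]
      exact hy.2
    · rw [DirectSum.decompose_of_mem_ne A.C hy.1 hhg]
      exact I.zero_mem
  · rw [DirectSum.decompose_add, DirectSum.add_apply, AddSubgroup.coe_add]
    exact I.add_mem hy hz

theorem HomogeneousTI.mem_of_isIdempotentElem_mk' (hI : A.HomogeneousTI I)
    {f : R} {g : G} (hf : f ∈ A.C g) (hg : g ≠ 1) (hidem : IsIdempotentElem (I.ringCon.mk' f)) :
    f ∈ I := by
  have hsq : f * f - f ∈ I :=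
    TwoSidedIdeal.ringCon_mk'_eq_zero_iff.mp (by rw [map_sub, map_mul, hidem.eq, sub_self])
  have hgg : g * g ≠ g := fun h => hg (mul_eq_right.mp h)
  simpa [DirectSum.decompose_sub, DirectSum.decompose_of_mem_same A.C hf,
    DirectSum.decompose_of_mem_ne A.C (A.mul_mem hf hf) hgg] using hI.decompose_mem hsq g

theorem HomogeneousTI.isNilpotent_mk'_of_ne_one (hI : A.HomogeneousTI I)
    {a f b : R} {k g h : G} (ha : a ∈ A.C k) (hk : k ≠ 1) (hf : f ∈ A.C g)
    (hidem : IsIdempotentElem (I.ringCon.mk' f)) (hb : b ∈ A.C h)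
    (hnil : IsNilpotent (I.ringCon.mk' b))
    (hab : I.ringCon.mk' a = I.ringCon.mk' f + I.ringCon.mk' b) :
    IsNilpotent (I.ringCon.mk' a) := by
  suffices I.ringCon.mk' a = I.ringCon.mk' b ∨ a ∈ I by
    rcases this with hab | haI
    · rwa [hab]
    · rw [TwoSidedIdeal.ringCon_mk'_eq_zero_iff.mpr haI]
      exact IsNilpotent.zero
  by_cases hg : g = 1
  · subst hg
    have hrel : a - f - b ∈ I :=
      TwoSidedIdeal.ringCon_mk'_eq_zero_iff.mp (by rw [map_sub, map_sub, hab]; abel)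
    have hcomp := hI.decompose_mem hrel k
    rw [DirectSum.decompose_sub, DirectSum.decompose_sub, DirectSum.sub_apply,
      DirectSum.sub_apply, AddSubgroup.coe_sub, AddSubgroup.coe_sub,
      DirectSum.decompose_of_mem_same A.C ha, DirectSum.decompose_of_mem_ne A.C hf hk.symm,
      sub_zero] at hcomp
    by_cases hhk : h = k
    · subst hhk
      rw [DirectSum.decompose_of_mem_same A.C hb] at hcomp
      left
      rw [← sub_eq_zero, ← map_sub]
      exact TwoSidedIdeal.ringCon_mk'_eq_zero_iff.mpr hcomp
    · right
      rwa [DirectSum.decompose_of_mem_ne A.C hb hhk, sub_zero] at hcomp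
  · left
    rw [hab, TwoSidedIdeal.ringCon_mk'_eq_zero_iff.mpr (hI.mem_of_isIdempotentElem_mk' hf hg hidem),
      zero_add]

end Grading

/-- Let `I` be a homogeneous nilpotent two-sided ideal of a `G`-graded ring `R`.
If `a` is a homogeneous element of `R` whose image in `R/I` is graded strongly
nil clean, then `a` is graded strongly nil clean in `R`. -/
theorem stmt9 {G : Type*} [Group G] [DecidableEq G] {R : Type*} [Ring R]
    (A : Grading G R) (I : TwoSidedIdeal R) (hhom : A.HomogeneousTI I)
    (hnilp : Grading.NilpotentTI I) (a : R) (ha : A.Homogeneous a)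
    (hq : A.QuotIsGradedStronglyNilClean I (I.ringCon.mk' a)) :
    A.IsGradedStronglyNilClean a := by
  obtain ⟨_, _, ⟨g, hfq⟩, hidem, ⟨h, hbq⟩, hnil, hcomm, hab⟩ := hq
  obtain ⟨f, hf, rfl⟩ := AddSubgroup.mem_map.mp hfq
  obtain ⟨b, hb, rfl⟩ := AddSubgroup.mem_map.mp hbq
  obtain ⟨k, hak⟩ := ha
  by_cases hk : k = 1
  · subst hk
    refine A.isGradedStronglyNilClean_of_mem_one hak (hnilp.isNilpotent_of_isNilpotent_mk' ?_)
    rw [map_sub, map_pow, hab]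
    exact isNilpotent_sq_sub_self_add hidem hnil hcomm
  · exact A.isGradedStronglyNilClean_of_isNilpotent ⟨k, hak⟩ (hnilp.isNilpotent_of_isNilpotent_mk'
      (hhom.isNilpotent_mk'_of_ne_one hak hk hf hidem hb hnil hab))
end
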